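/- arXiv:math/9811157 — 3 statements merged into one kernel-verified Lean document; each statement's English description precedes it below -/
import Mathlib

section
/- There is a universal constant C such that for every n, every w ∈ ℝ^n, every s ∈ ℝ, and every ε ∈ (0,1), the generalized weighted majority event M_{w,s} = {x ∈ Ω_n : Σ_{j=1}^n (2x_j − 1) w_j > s} satisfies P[M_{w,s} \ N_ε M_{w,s}] ≤ C ε^{1/4}. In particular, the family of all such events is uniformly stable. -/
/-! Peres' argument. Label every coordinate independently: with probability `2εm` by a uniform
block `i : Fin m`, otherwise not at all. Resampling block `i` by fair coins then flips each
coordinate with probability exactly `ε`, whatever `i` is, so `m · P[M \ N_ε M]` is the expected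
number of blocks whose resampling pushes the weighted sum from above `s` to below it. Writing a
uniform point as a fixed `z` with block `i` multiplied by an independent sign `b i`, the weighted
sum becomes `c + ∑ i, b i * a i`, and a block can only cause such a crossing if it is pivotal for
this threshold function of `m` signs. Its total influence is at most `√m` (Cauchy–Schwarz against
`∑ i, b i`), so `P[M \ N_ε M] ≤ 4 / √m ≤ 8 √ε` for `m = ⌊1 / (2ε)⌋`, and `√ε ≤ ε ^ (1/4)`. -/

namespace BKS

open Finset Filter

variable {ι : Type} [Fintype ι] [DecidableEq ι]

/-- Probability of an event under the uniform measure on `ι → Bool`. -/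
noncomputable def cprob (A : Finset (ι → Bool)) : ℝ :=
  (A.card : ℝ) / 2 ^ Fintype.card ι

/-- Expectation of a function under the uniform measure on `ι → Bool`. -/
noncomputable def cexpect (f : (ι → Bool) → ℝ) : ℝ :=
  (∑ x : ι → Bool, f x) / 2 ^ Fintype.card ι

/-- Real-valued indicator of an event. -/
noncomputable def indE (A : Finset (ι → Bool)) : (ι → Bool) → ℝ :=
  fun x => if x ∈ A then 1 else 0

/-- Transition kernel of the ε-noise: probability that `N_ε(x) = y`. -/
noncomputable def noiseKernel (ε : ℝ) (x y : ι → Bool) : ℝ :=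
  ∏ j : ι, if y j = x j then 1 - ε else ε

/-- `P(N_ε(x) ∈ A | x)`. -/
noncomputable def condProb (ε : ℝ) (A : Finset (ι → Bool)) (x : ι → Bool) : ℝ :=
  ∑ y ∈ A, noiseKernel ε x y

/-- Sensitivity gauge φ(A, ε) = inf{δ > 0 : P{x : |P(N_ε(x) ∈ A | x) − P(A)| > δ} < δ}. -/
noncomputable def gauge (ε : ℝ) (A : Finset (ι → Bool)) : ℝ :=
  sInf {δ : ℝ | 0 < δ ∧
    cprob (@Finset.filter _ (fun x => δ < |condProb ε A x - cprob A|)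
      (Classical.decPred _) Finset.univ) < δ}

/-- Flip the `k`-th bit. -/
def flipBit (k : ι) (x : ι → Bool) : ι → Bool := Function.update x k (!x k)

/-- Influence of the `k`-th variable: `I_k(f) = E|f(σ_k x) − f(x)|`. -/
noncomputable def influence (k : ι) (f : (ι → Bool) → ℝ) : ℝ :=
  cexpect fun x => |f (flipBit k x) - f x|

/-- `I(f) = Σ_k I_k(f)`. -/
noncomputable def totalInf (f : (ι → Bool) → ℝ) : ℝ := ∑ k : ι, influence k f

/-- `II(f) = Σ_k I_k(f)²`. -/
noncomputable def sqInf (f : (ι → Bool) → ℝ) : ℝ := ∑ k : ι, (influence k f) ^ 2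

/-- `II(A)` for an event `A`. -/
noncomputable def sqInfE (A : Finset (ι → Bool)) : ℝ := sqInf (indE A)

/-- A monotone (upward closed) event. -/
def MonotoneEvent (A : Finset (ι → Bool)) : Prop :=
  ∀ x y : ι → Bool, (∀ j, x j ≤ y j) → x ∈ A → y ∈ A

/-- Fourier–Walsh coefficient `f̂(S) = E[f · u_S]`, where `u_S(x) = (−1)^{|S ∩ x|}`. -/
noncomputable def walshFourier (f : (ι → Bool) → ℝ) (S : Finset ι) : ℝ :=
  cexpect fun x => f x * (-1 : ℝ) ^ (S.filter fun j => x j = true).card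

/-- `Q_ε f (x) = E[f(N_ε(x))]`. -/
noncomputable def Qop (ε : ℝ) (f : (ι → Bool) → ℝ) (x : ι → Bool) : ℝ :=
  ∑ y : ι → Bool, noiseKernel ε x y * f y

/-- `VAR(f, ε)`: variance of `x ↦ E[f(N_ε(x)) | x]`. -/
noncomputable def VAR (ε : ℝ) (f : (ι → Bool) → ℝ) : ℝ :=
  cexpect fun x => (Qop ε f x - cexpect (Qop ε f)) ^ 2

/-- `P[A △ N_ε A]`. -/
noncomputable def probSymmDiff (ε : ℝ) (A : Finset (ι → Bool)) : ℝ :=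
  cexpect fun x => ∑ y : ι → Bool, noiseKernel ε x y *
    (if (x ∈ A) ↔ (y ∈ A) then 0 else 1)

/-- `P[A \ N_ε A]`. -/
noncomputable def probOffDiff (ε : ℝ) (A : Finset (ι → Bool)) : ℝ :=
  cexpect fun x => ∑ y : ι → Bool, noiseKernel ε x y *
    (if x ∈ A ∧ y ∉ A then 1 else 0)

/-- Majority function on the set `K`: `M_K(x) = sign(Σ_{j∈K}(2x_j − 1))`. -/
noncomputable def majority (K : Finset ι) (x : ι → Bool) : ℝ :=
  Real.sign (∑ j ∈ K, (2 * (if x j then (1:ℝ) else 0) - 1))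

/-- Weighted majority function `M_w(x) = sign(Σ_j (2x_j − 1) w_j)`. -/
noncomputable def wMajority (w : ι → ℝ) (x : ι → Bool) : ℝ :=
  Real.sign (∑ j : ι, (2 * (if x j then (1:ℝ) else 0) - 1) * w j)

/-- The discrete cube Ω_n = {0,1}^n. -/
abbrev Cube (n : ℕ) := Fin n → Bool

/-- The generalized weighted majority event M_{w,s} = {x : Σ_j (2x_j − 1) w_j > s}. -/
noncomputable def wmajEvent (n : ℕ) (w : Fin n → ℝ) (s : ℝ) : Finset (Cube n) :=
  @Finset.filter _ (fun x => s < ∑ j, (2 * (if x j then (1:ℝ) else 0) - 1) * w j)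
    (Classical.decPred _) Finset.univ

section Flips

omit [Fintype ι] [DecidableEq ι]

def flipBy (F x : ι → Bool) : ι → Bool := fun j => xor (F j) (x j)

lemma flipBy_involutive (F : ι → Bool) : Function.Involutive (flipBy F) := by
  intro x; funext j; simp [flipBy]

lemma flipBy_comm (F G x : ι → Bool) : flipBy F (flipBy G x) = flipBy G (flipBy F x) := by
  funext j; simp only [flipBy, Bool.xor_left_comm]

lemma flipBy_left_involutive (x : ι → Bool) : Function.Involutive (flipBy · x) := by
  intro F; funext j; simp [flipBy]

end Flips

lemma sum_comp_flipBy (F : ι → Bool) (f : (ι → Bool) → ℝ) :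
    ∑ x, f (flipBy F x) = ∑ x, f x :=
  Equiv.sum_comp ((flipBy_involutive F).toPerm _) f

lemma sum_comp_flipBy_left (x : ι → Bool) (f : (ι → Bool) → ℝ) :
    ∑ F, f (flipBy F x) = ∑ y, f y :=
  Equiv.sum_comp ((flipBy_left_involutive x).toPerm _) f

def piWeight {κ : Type*} (μ : κ → ℝ) (t : ι → κ) : ℝ := ∏ j, μ (t j)

lemma sum_piWeight {κ : Type*} [Fintype κ] (μ : κ → ℝ) :
    ∑ t : ι → κ, piWeight μ t = (∑ k, μ k) ^ Fintype.card ι := by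
  simp only [piWeight, ← Fintype.prod_sum, Finset.prod_const, Finset.card_univ]

omit [DecidableEq ι] in
lemma piWeight_nonneg {κ : Type*} {μ : κ → ℝ} (hμ : ∀ k, 0 ≤ μ k) (t : ι → κ) :
    0 ≤ piWeight μ t :=
  Finset.prod_nonneg fun j _ => hμ (t j)

lemma sum_piWeight_mul_comp {κ κ' : Type*} [Fintype κ] [Fintype κ'] [DecidableEq κ']
    (μ : κ → ℝ) (β : κ → κ') (X : (ι → κ') → ℝ) :
    ∑ t : ι → κ, piWeight μ t * X (β ∘ t)
      = ∑ η : ι → κ', piWeight (fun k' => ∑ k with β k = k', μ k) η * X η := by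
  classical
  rw [← Finset.sum_fiberwise Finset.univ (fun t : ι → κ => β ∘ t)]
  refine Finset.sum_congr rfl fun η _ => ?_
  have hfiber : ({t | β ∘ t = η} : Finset (ι → κ))
      = Fintype.piFinset fun j => ({k | β k = η j} : Finset κ) := by
    ext t; simp [funext_iff]
  rw [Finset.sum_congr rfl fun t ht => by rw [(Finset.mem_filter.mp ht).2], ← Finset.sum_mul,
    hfiber, piWeight, Finset.prod_univ_sum]
  rfl

noncomputable def flipProb (ε : ℝ) : (ι → Bool) → ℝ :=
  piWeight fun b => if b then ε else 1 - ε

omit [DecidableEq ι] in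
lemma noiseKernel_flipBy (ε : ℝ) (x F : ι → Bool) :
    noiseKernel ε x (flipBy F x) = flipProb ε F := by
  refine Finset.prod_congr rfl fun j _ => ?_
  cases h : F j <;> simp [flipBy, h]

omit [DecidableEq ι] in
lemma noiseKernel_comm (ε : ℝ) (x y : ι → Bool) :
    noiseKernel ε x y = noiseKernel ε y x := by
  simp only [noiseKernel, eq_comm]

lemma sum_noiseKernel (ε : ℝ) (x : ι → Bool) : ∑ y, noiseKernel ε x y = 1 := by
  rw [← sum_comp_flipBy_left x]
  simp [noiseKernel_flipBy, flipProb, sum_piWeight]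

noncomputable def exitInd (A : Finset (ι → Bool)) (x y : ι → Bool) : ℝ :=
  if x ∈ A ∧ y ∉ A then 1 else 0

omit [DecidableEq ι] in
lemma exitInd_le_one (A : Finset (ι → Bool)) (x y : ι → Bool) : exitInd A x y ≤ 1 := by
  unfold exitInd; split_ifs <;> norm_num

lemma probOffDiff_eq_sum_flipProb (ε : ℝ) (A : Finset (ι → Bool)) :
    probOffDiff ε A
      = (∑ x, ∑ F, flipProb ε F * exitInd A x (flipBy F x)) / 2 ^ Fintype.card ι := by
  refine congrArg (· / _) (Finset.sum_congr rfl fun x _ => ?_)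
  exact (sum_comp_flipBy_left x fun y => noiseKernel ε x y * exitInd A x y).symm.trans
    (by simp only [noiseKernel_flipBy])

lemma probOffDiff_le_one {ε : ℝ} (hε0 : 0 ≤ ε) (hε1 : ε ≤ 1) (A : Finset (ι → Bool)) :
    probOffDiff ε A ≤ 1 := by
  have hK : ∀ x y : ι → Bool, 0 ≤ noiseKernel ε x y := fun x y =>
    Finset.prod_nonneg fun j _ => by split_ifs <;> linarith
  rw [probOffDiff, cexpect, div_le_one (by positivity)]
  calc ∑ x, ∑ y, noiseKernel ε x y * exitInd A x y
      ≤ ∑ x : ι → Bool, ∑ y, noiseKernel ε x y := by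
        gcongr with x _ y _
        exact mul_le_of_le_one_right (hK x y) (exitInd_le_one A x y)
    _ = 2 ^ Fintype.card ι := by simp [sum_noiseKernel]

/-- By the symmetry of the noise kernel, both halves of `A △ N_ε A` have the same
probability. -/
lemma probSymmDiff_eq_two_mul_probOffDiff (ε : ℝ) (A : Finset (ι → Bool)) :
    probSymmDiff ε A = 2 * probOffDiff ε A := by
  have hsplit : ∀ x y : ι → Bool,
      (if (x ∈ A ↔ y ∈ A) then (0 : ℝ) else 1) = exitInd A x y + exitInd A y x := by
    intro x y; by_cases hx : x ∈ A <;> by_cases hy : y ∈ A <;> simp [exitInd, hx, hy]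
  have hswap : ∑ x, ∑ y, noiseKernel ε x y * exitInd A y x
      = ∑ x, ∑ y, noiseKernel ε x y * exitInd A x y := by
    rw [Finset.sum_comm]; simp only [noiseKernel_comm ε _]
  simp only [probSymmDiff, probOffDiff, cexpect, hsplit, mul_add, Finset.sum_add_distrib, hswap]
  simp only [exitInd]
  ring

noncomputable def flipSign (b : Bool) : ℝ := if b then -1 else 1

section Signs

omit [Fintype ι] [DecidableEq ι]

lemma flipSign_false : flipSign false = 1 := if_neg Bool.false_ne_true

lemma flipSign_not (b : Bool) : flipSign (!b) = -flipSign b := by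
  cases b <;> simp [flipSign]

lemma flipSign_mul_self (b : Bool) : flipSign b * flipSign b = 1 := by
  cases b <;> simp [flipSign]

lemma abs_flipSign (b : Bool) : |flipSign b| = 1 := by
  cases b <;> simp [flipSign]

end Signs

omit [Fintype ι] in
lemma flipBit_involutive (k : ι) : Function.Involutive (flipBit k) := by
  intro x; simp [flipBit]

omit [Fintype ι] in
lemma flipBit_apply_ne {j k : ι} (h : j ≠ k) (x : ι → Bool) : flipBit k x j = x j :=
  Function.update_of_ne h _ _

lemma sum_flipSign_mul_comp_flipBit (k : ι) (h : (ι → Bool) → ℝ) :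
    ∑ b, flipSign (b k) * h (flipBit k b) = -∑ b, flipSign (b k) * h b := by
  rw [← Equiv.sum_comp ((flipBit_involutive k).toPerm _) fun b => flipSign (b k) * h b,
    ← Finset.sum_neg_distrib]
  refine Finset.sum_congr rfl fun b _ => ?_
  simp [flipBit, flipSign_not]

lemma sum_flipSign_mul_flipSign (i j : ι) :
    ∑ b : ι → Bool, flipSign (b i) * flipSign (b j)
      = if i = j then 2 ^ Fintype.card ι else 0 := by
  split_ifs with hij
  · simp [hij, flipSign_mul_self]
  · have hsymm := sum_flipSign_mul_comp_flipBit i fun b => flipSign (b j)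
    simp only [flipBit_apply_ne (Ne.symm hij)] at hsymm
    linarith

lemma sum_sq_sum_mul_flipSign (t : ι → ℝ) :
    ∑ b : ι → Bool, (∑ i, t i * flipSign (b i)) ^ 2
      = 2 ^ Fintype.card ι * ∑ i, t i ^ 2 := by
  have hexpand : ∀ b : ι → Bool, (∑ i, t i * flipSign (b i)) ^ 2
      = ∑ i, ∑ j, t i * t j * (flipSign (b i) * flipSign (b j)) := fun b => by
    simp only [sq, Finset.sum_mul_sum, mul_mul_mul_comm]
  simp only [hexpand]
  rw [Finset.sum_comm, Finset.mul_sum]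
  refine Finset.sum_congr rfl fun i _ => ?_
  rw [Finset.sum_comm]
  simp [← Finset.mul_sum, sum_flipSign_mul_flipSign]
  ring

lemma sum_abs_sum_mul_flipSign_le (t : ι → ℝ) :
    ∑ b : ι → Bool, |∑ i, t i * flipSign (b i)|
      ≤ 2 ^ Fintype.card ι * √(∑ i, t i ^ 2) := by
  have hCS := Finset.sum_mul_sq_le_sq_mul_sq Finset.univ (fun _ : ι → Bool => (1 : ℝ))
    fun b => |∑ i, t i * flipSign (b i)|
  simp only [one_mul, one_pow, sq_abs, sum_sq_sum_mul_flipSign] at hCS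
  rw [← Real.sqrt_sq (by positivity : (0 : ℝ) ≤ 2 ^ Fintype.card ι),
    ← Real.sqrt_mul (by positivity)]
  refine Real.le_sqrt_of_sq_le (hCS.trans_eq ?_)
  simp
  ring

/-- Indicator that `R + v` and `R - v` lie on different sides of the threshold `s`. -/
noncomputable def pivotalInd (s v R : ℝ) : ℝ := if s - |v| < R ∧ R ≤ s + |v| then 1 else 0

lemma pivotalInd_flipSign_mul (s v R : ℝ) (e : Bool) :
    pivotalInd s (flipSign e * v) R = pivotalInd s v R := by
  simp [pivotalInd, abs_mul, abs_flipSign]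

lemma pivotalInd_eq_sub (s v R : ℝ) (e : Bool) :
    pivotalInd s v R = (if 0 ≤ v then 1 else -1) * flipSign e *
      ((if s < R + flipSign e * v then 1 else 0) - (if s < R - flipSign e * v then 1 else 0)) := by
  unfold pivotalInd
  rcases le_or_gt 0 v with hv | hv
  · cases e <;> simp only [flipSign, abs_of_nonneg hv, if_pos hv] <;> split_ifs <;> grind
  · cases e <;> simp only [flipSign, abs_of_neg hv, if_neg hv.not_ge] <;> split_ifs <;> grind

lemma crossInd_le_pivotalInd_add (s R v v' : ℝ) :
    (if s < R + v ∧ ¬ s < R + v' then (1 : ℝ) else 0)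
      ≤ pivotalInd s v R + pivotalInd s v' R := by
  have h0 : 0 ≤ pivotalInd s v R := by unfold pivotalInd; split_ifs <;> norm_num
  have h0' : 0 ≤ pivotalInd s v' R := by unfold pivotalInd; split_ifs <;> norm_num
  split_ifs with hcross
  · obtain ⟨hv, hv'⟩ := hcross
    unfold pivotalInd
    split_ifs <;> grind [le_abs_self, neg_abs_le]
  · linarith

/-- The signed influences add up to a correlation with `∑ i, ±flipSign (b i)`, which
Cauchy–Schwarz bounds by `√(card ι)`. -/
lemma sum_sum_pivotalInd_le (a : ι → ℝ) (c s : ℝ) :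
    ∑ i, ∑ b : ι → Bool,
        pivotalInd s (a i) (c + ∑ i' ∈ univ.erase i, flipSign (b i') * a i')
      ≤ 2 ^ Fintype.card ι * (2 * √(Fintype.card ι)) := by
  set g : (ι → Bool) → ℝ := fun b => if s < c + ∑ i, flipSign (b i) * a i then 1 else 0
  set τ : ι → ℝ := fun i => if 0 ≤ a i then 1 else -1
  have hsplit : ∀ i (b : ι → Bool), c + ∑ i', flipSign (b i') * a i'
      = c + ∑ i' ∈ univ.erase i, flipSign (b i') * a i' + flipSign (b i) * a i := by
    intro i b; rw [← Finset.add_sum_erase _ _ (Finset.mem_univ i)]; ring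
  have hpivotal : ∀ i b, pivotalInd s (a i) (c + ∑ i' ∈ univ.erase i, flipSign (b i') * a i')
      = τ i * (flipSign (b i) * (g b - g (flipBit i b))) := by
    intro i b
    have hrest : ∑ i' ∈ univ.erase i, flipSign (flipBit i b i') * a i'
        = ∑ i' ∈ univ.erase i, flipSign (b i') * a i' :=
      Finset.sum_congr rfl fun i' hi' => by rw [flipBit_apply_ne (Finset.ne_of_mem_erase hi')]
    have hflip : c + ∑ i', flipSign (flipBit i b i') * a i'
        = c + ∑ i' ∈ univ.erase i, flipSign (b i') * a i' - flipSign (b i) * a i := by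
      rw [hsplit i, hrest, flipBit, Function.update_self, flipSign_not]; ring
    simp only [g, hsplit i b, hflip]
    rw [pivotalInd_eq_sub s (a i) _ (b i)]
    ring
  have hinfluence : ∀ i, ∑ b, flipSign (b i) * (g b - g (flipBit i b))
      = 2 * ∑ b, g b * flipSign (b i) := by
    intro i
    simp only [mul_sub, Finset.sum_sub_distrib, sum_flipSign_mul_comp_flipBit, mul_comm (g _)]
    ring
  calc ∑ i, ∑ b : ι → Bool,
        pivotalInd s (a i) (c + ∑ i' ∈ univ.erase i, flipSign (b i') * a i')
      = ∑ i, τ i * (2 * ∑ b, g b * flipSign (b i)) := by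
        simp only [hpivotal, ← Finset.mul_sum, hinfluence]
    _ = 2 * ∑ b, g b * ∑ i, τ i * flipSign (b i) := by
        simp only [Finset.mul_sum]
        rw [Finset.sum_comm]
        exact Finset.sum_congr rfl fun b _ => Finset.sum_congr rfl fun i _ => by ring
    _ ≤ 2 * ∑ b : ι → Bool, |∑ i, τ i * flipSign (b i)| := by
        gcongr with b
        simp only [g]
        split_ifs <;> simp [le_abs_self]
    _ ≤ 2 * (2 ^ Fintype.card ι * √(∑ i, τ i ^ 2)) := by
        gcongr; exact sum_abs_sum_mul_flipSign_le τ
    _ = 2 ^ Fintype.card ι * (2 * √(Fintype.card ι)) := by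
        have hτ : ∀ i, τ i ^ 2 = 1 := fun i => by simp only [τ]; split_ifs <;> norm_num
        simp [hτ]
        ring

noncomputable def spin (b : Bool) : ℝ := 2 * (if b then 1 else 0) - 1

noncomputable def weightedSum (w : ι → ℝ) (x : ι → Bool) : ℝ := ∑ j, spin (x j) * w j

noncomputable def thresholdEvent (w : ι → ℝ) (s : ℝ) : Finset (ι → Bool) :=
  {x | s < weightedSum w x}

lemma mem_thresholdEvent {w : ι → ℝ} {s : ℝ} {x : ι → Bool} :
    x ∈ thresholdEvent w s ↔ s < weightedSum w x := by
  simp [thresholdEvent]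

lemma wmajEvent_eq_thresholdEvent (n : ℕ) (w : Fin n → ℝ) (s : ℝ) :
    wmajEvent n w s = thresholdEvent w s := by
  ext x; simp [wmajEvent, mem_thresholdEvent, weightedSum, spin]

omit [Fintype ι] [DecidableEq ι] in
lemma spin_xor (f b : Bool) : spin (xor f b) = flipSign f * spin b := by
  cases f <;> cases b <;> norm_num [spin, flipSign]

section Blocks

/-! A labelling `lab : ι → Option (Fin m)` splits the coordinates into the blocks
`{j | lab j = some i}` and the unlabelled rest. -/

omit [DecidableEq ι]

variable {m : ℕ} (w : ι → ℝ) (lab : ι → Option (Fin m))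

def blockMask (b : Fin m → Bool) (j : ι) : Bool := (lab j).elim false b

def blockPart (i : Fin m) (F : ι → Bool) (j : ι) : Bool := decide (lab j = some i) && F j

noncomputable def blockSum (o : Option (Fin m)) (x : ι → Bool) : ℝ :=
  ∑ j with lab j = o, spin (x j) * w j

noncomputable def restSum (b : Fin m → Bool) (i : Fin m) (z : ι → Bool) : ℝ :=
  blockSum w lab none z + ∑ i' ∈ univ.erase i, flipSign (b i') * blockSum w lab (some i') z

lemma weightedSum_eq_blockSum (x : ι → Bool) :
    weightedSum w x = blockSum w lab none x + ∑ i, blockSum w lab (some i) x := by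
  rw [weightedSum, ← Finset.sum_fiberwise Finset.univ lab, Fintype.sum_option]
  rfl

variable {w lab} in
lemma blockSum_congr {o : Option (Fin m)} {x y : ι → Bool} (h : ∀ j, lab j = o → x j = y j) :
    blockSum w lab o x = blockSum w lab o y :=
  Finset.sum_congr rfl fun j hj => by rw [h j (Finset.mem_filter.mp hj).2]

variable {w lab} in
lemma blockSum_flipBy_of_eq {o : Option (Fin m)} {F : ι → Bool} {f : Bool}
    (h : ∀ j, lab j = o → F j = f) (x : ι → Bool) :
    blockSum w lab o (flipBy F x) = flipSign f * blockSum w lab o x := by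
  rw [blockSum, blockSum, Finset.mul_sum]
  refine Finset.sum_congr rfl fun j hj => ?_
  rw [flipBy, h j (Finset.mem_filter.mp hj).2, spin_xor, mul_assoc]

lemma weightedSum_flipBy_blockMask (b : Fin m → Bool) (i : Fin m) (z : ι → Bool) :
    weightedSum w (flipBy (blockMask lab b) z)
      = restSum w lab b i z + flipSign (b i) * blockSum w lab (some i) z := by
  have hblock : ∀ o, blockSum w lab o (flipBy (blockMask lab b) z)
      = flipSign (o.elim false b) * blockSum w lab o z :=
    fun o => blockSum_flipBy_of_eq (fun j hj => by rw [blockMask, hj]) z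
  rw [weightedSum_eq_blockSum w lab, restSum, ← Finset.add_sum_erase _ _ (Finset.mem_univ i)]
  simp only [hblock, Option.elim, flipSign_false, one_mul]
  ring

lemma blockSum_flipBy_blockPart_of_ne {o : Option (Fin m)} {i : Fin m} (h : o ≠ some i)
    (F z : ι → Bool) : blockSum w lab o (flipBy (blockPart lab i F) z) = blockSum w lab o z := by
  rw [blockSum_flipBy_of_eq (f := false) fun j hj => by simp [blockPart, hj, h], flipSign_false,
    one_mul]

lemma blockSum_flipBy_blockPart (i : Fin m) (F z : ι → Bool) :
    blockSum w lab (some i) (flipBy (blockPart lab i F) z) = blockSum w lab (some i) (flipBy F z) :=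
  blockSum_congr fun j hj => by simp [flipBy, blockPart, hj]

lemma restSum_flipBy_blockPart (b : Fin m → Bool) (i : Fin m) (F z : ι → Bool) :
    restSum w lab b i (flipBy (blockPart lab i F) z) = restSum w lab b i z := by
  simp only [restSum, blockSum_flipBy_blockPart_of_ne w lab (Option.some_ne_none i).symm]
  congr 1
  refine Finset.sum_congr rfl fun i' hi' => ?_
  rw [blockSum_flipBy_blockPart_of_ne w lab (by simpa using Finset.ne_of_mem_erase hi')]

end Blocks

section BlockResampling

variable {m : ℕ} (w : ι → ℝ) (s : ℝ) (lab : ι → Option (Fin m))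

lemma exitInd_flipBy_blockPart_le (b : Fin m → Bool) (i : Fin m) (F z : ι → Bool) :
    exitInd (thresholdEvent w s) (flipBy (blockMask lab b) z)
        (flipBy (blockPart lab i F) (flipBy (blockMask lab b) z))
      ≤ pivotalInd s (blockSum w lab (some i) z) (restSum w lab b i z)
        + pivotalInd s (blockSum w lab (some i) (flipBy F z)) (restSum w lab b i z) := by
  rw [flipBy_comm, ← pivotalInd_flipSign_mul s (blockSum w lab (some i) z) _ (b i),
    ← pivotalInd_flipSign_mul s (blockSum w lab (some i) (flipBy F z)) _ (b i)]
  simp only [exitInd, mem_thresholdEvent, weightedSum_flipBy_blockMask w lab b i,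
    restSum_flipBy_blockPart, blockSum_flipBy_blockPart]
  exact crossInd_le_pivotalInd_add _ _ _ _

/-- Resampling block `i` by `F` is the measure-preserving change of variables
`z ↦ flipBy (blockPart lab i F) z`, which leaves `restSum` unchanged. -/
lemma sum_pivotalInd_blockSum_flipBy (b : Fin m → Bool) (i : Fin m) (F : ι → Bool) :
    ∑ z, pivotalInd s (blockSum w lab (some i) (flipBy F z)) (restSum w lab b i z)
      = ∑ z, pivotalInd s (blockSum w lab (some i) z) (restSum w lab b i z) := by
  symm
  rw [← sum_comp_flipBy (blockPart lab i F)]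
  simp only [restSum_flipBy_blockPart, blockSum_flipBy_blockPart]

lemma sum_exitInd_flipBy_blockPart_le (b : Fin m → Bool) (i : Fin m) :
    ∑ x, ∑ F, exitInd (thresholdEvent w s) x (flipBy (blockPart lab i F) x)
      ≤ 2 ^ Fintype.card ι *
          (2 * ∑ z, pivotalInd s (blockSum w lab (some i) z) (restSum w lab b i z)) := by
  rw [← sum_comp_flipBy (blockMask lab b), Finset.sum_comm]
  calc _ ≤ ∑ F : ι → Bool, ∑ z,
          (pivotalInd s (blockSum w lab (some i) z) (restSum w lab b i z)
            + pivotalInd s (blockSum w lab (some i) (flipBy F z)) (restSum w lab b i z)) := by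
        gcongr with F _ z
        exact exitInd_flipBy_blockPart_le w s lab b i F z
    _ = _ := by
        simp only [Finset.sum_add_distrib, sum_pivotalInd_blockSum_flipBy, Finset.sum_const,
          Finset.card_univ, Fintype.card_fun, Fintype.card_bool, nsmul_eq_mul]
        push_cast
        ring

/-- Averaging over the random block signs `b` turns the block pivotalities into those of a
threshold function of `m` independent signs. -/
lemma sum_sum_exitInd_flipBy_blockPart_le :
    ∑ i, ∑ x, ∑ F, exitInd (thresholdEvent w s) x (flipBy (blockPart lab i F) x)
      ≤ 4 ^ Fintype.card ι * (4 * √m) := by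
  set n := Fintype.card ι
  set T := ∑ i, ∑ x, ∑ F, exitInd (thresholdEvent w s) x (flipBy (blockPart lab i F) x)
  have hpivotal : ∀ z, ∑ i, ∑ b : Fin m → Bool,
      pivotalInd s (blockSum w lab (some i) z) (restSum w lab b i z) ≤ 2 ^ m * (2 * √m) := by
    intro z
    simpa [restSum, add_comm] using
      sum_sum_pivotalInd_le (fun i => blockSum w lab (some i) z) (blockSum w lab none z) s
  have hfour : (4 : ℝ) ^ n = 2 ^ n * 2 ^ n := by rw [← mul_pow]; norm_num
  refine le_of_mul_le_mul_left ?_ (by positivity : (0 : ℝ) < 2 ^ m)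
  calc 2 ^ m * T = ∑ b : Fin m → Bool, T := by simp
    _ ≤ ∑ b : Fin m → Bool, ∑ i, 2 ^ n *
          (2 * ∑ z, pivotalInd s (blockSum w lab (some i) z) (restSum w lab b i z)) := by
        gcongr with b
        exact Finset.sum_le_sum fun i _ => sum_exitInd_flipBy_blockPart_le w s lab b i
    _ = 2 ^ n * 2 * ∑ z, ∑ i, ∑ b : Fin m → Bool,
          pivotalInd s (blockSum w lab (some i) z) (restSum w lab b i z) := by
        simp only [Finset.mul_sum, mul_assoc]
        exact Finset.sum_comm.trans ((Finset.sum_congr rfl fun _ _ => Finset.sum_comm).trans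
          Finset.sum_comm)
    _ ≤ 2 ^ n * 2 * ∑ z : ι → Bool, 2 ^ m * (2 * √m) := by gcongr with z; exact hpivotal z
    _ = 2 ^ m * (4 ^ n * (4 * √m)) := by simp [n, hfour]; ring

end BlockResampling

noncomputable def labelProb (m : ℕ) (q : ℝ) : Option (Fin m) → ℝ
  | none => 1 - q
  | some _ => q / m

lemma sum_labelProb {m : ℕ} (hm : m ≠ 0) (q : ℝ) : ∑ o, labelProb m q o = 1 := by
  simp [Fintype.sum_option, labelProb]
  field_simp
  ring

lemma labelProb_nonneg {m : ℕ} {q : ℝ} (hq0 : 0 ≤ q) (hq1 : q ≤ 1) (o : Option (Fin m)) :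
    0 ≤ labelProb m q o := by
  cases o <;> simp only [labelProb] <;> first | linarith | positivity

/-- The `ε`-noise is "label each coordinate by `labelProb m (2 ε m)`, then resample block `i` by
fair coins": a coordinate is flipped with probability `(2 ε m / m) · (1 / 2) = ε`. -/
lemma sum_flipProb_mul_eq {m : ℕ} (hm : m ≠ 0) (ε : ℝ) (i : Fin m)
    (X : (ι → Bool) → ℝ) :
    ∑ F, flipProb ε F * X F
      = ∑ lab : ι → Option (Fin m), piWeight (labelProb m (2 * ε * m)) lab *
          ((∑ F, X (blockPart lab i F)) / 2 ^ Fintype.card ι) := by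
  set μ : Option (Fin m) × Bool → ℝ := fun k => labelProb m (2 * ε * m) k.1 / 2
  set β : Option (Fin m) × Bool → Bool := fun k => decide (k.1 = some i) && k.2
  have hpush : (fun f => ∑ k with β k = f, μ k) = fun f => if f then ε else 1 - ε := by
    funext f
    cases f <;>
      simp [μ, β, Finset.sum_filter, Fintype.sum_prod_type, Fintype.sum_option, labelProb]
    · rw [Finset.sum_add_distrib, Finset.sum_ite, Finset.filter_eq', if_pos (Finset.mem_univ _)]
      simp [Finset.filter_ne', Finset.card_erase_of_mem,
        Nat.cast_sub (Nat.one_le_iff_ne_zero.mpr hm)]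
      field_simp
      ring
    · field_simp
  have hsplit : ∀ (lab : ι → Option (Fin m)) (F : ι → Bool),
      piWeight μ (fun j => (lab j, F j))
        = piWeight (labelProb m (2 * ε * m)) lab / 2 ^ Fintype.card ι := by
    intro lab F
    simp [piWeight, μ, Finset.prod_div_distrib]
  rw [flipProb, ← hpush, ← sum_piWeight_mul_comp μ β X,
    ← (Equiv.arrowProdEquivProdArrow _ _ _).symm.sum_comp, Fintype.sum_prod_type]
  refine Finset.sum_congr rfl fun lab _ => ?_
  simp only [Finset.mul_sum, Finset.sum_div]
  refine Finset.sum_congr rfl fun F _ => ?_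
  rw [hsplit]
  exact (div_mul_eq_mul_div _ _ _).trans (mul_div_assoc _ _ _)

lemma probOffDiff_thresholdEvent_le_inv_sqrt {m : ℕ} (hm : m ≠ 0) (w : ι → ℝ) (s : ℝ)
    {ε : ℝ} (hε0 : 0 ≤ ε) (hεm : 2 * ε * m ≤ 1) :
    probOffDiff ε (thresholdEvent w s) ≤ 4 / √m := by
  set A := thresholdEvent w s
  set n := Fintype.card ι
  set N := ∑ x, ∑ F, flipProb ε F * exitInd A x (flipBy F x)
  set W := piWeight (ι := ι) (labelProb m (2 * ε * m))
  have hdecomp : ∀ i : Fin m,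
      N = ∑ lab, W lab *
        ((∑ x, ∑ F, exitInd A x (flipBy (blockPart lab i F) x)) / 2 ^ n) := by
    intro i
    simp only [N, sum_flipProb_mul_eq hm ε i fun F => exitInd A _ (flipBy F _)]
    rw [Finset.sum_comm]
    simp only [Finset.mul_sum, Finset.sum_div]
    rfl
  have hmN : m * N ≤ 2 ^ n * (4 * √m) := by
    have hW : ∀ lab, 0 ≤ W lab := piWeight_nonneg (labelProb_nonneg (by positivity) hεm)
    calc (m : ℝ) * N = ∑ _i : Fin m, N := by simp
      _ = ∑ lab, W lab *
          ((∑ i : Fin m, ∑ x, ∑ F, exitInd A x (flipBy (blockPart lab i F) x)) / 2 ^ n) := by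
          conv_lhs => enter [2, i]; rw [hdecomp i]
          rw [Finset.sum_comm]
          simp only [Finset.sum_div, Finset.mul_sum]
      _ ≤ ∑ lab, W lab * (4 ^ n * (4 * √m) / 2 ^ n) := by
          gcongr with lab
          · exact hW lab
          · exact sum_sum_exitInd_flipBy_blockPart_le w s lab
      _ = 2 ^ n * (4 * √m) := by
          rw [← Finset.sum_mul, sum_piWeight, sum_labelProb hm, one_pow, one_mul,
            show (4 : ℝ) ^ n = 2 ^ n * 2 ^ n by rw [← mul_pow]; norm_num]
          field_simp
  have hsqrt : 0 < √(m : ℝ) := Real.sqrt_pos.mpr (by positivity)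
  rw [probOffDiff_eq_sum_flipProb, div_le_div_iff₀ (by positivity) hsqrt]
  refine le_of_mul_le_mul_left ?_ hsqrt
  calc √m * (N * √m) = m * N := by
        linear_combination N * Real.mul_self_sqrt (Nat.cast_nonneg m : (0 : ℝ) ≤ m)
    _ ≤ √m * (4 * 2 ^ n) := by linarith

lemma probOffDiff_thresholdEvent_le_sqrt (w : ι → ℝ) (s : ℝ) {ε : ℝ} (hε0 : 0 < ε)
    (hε1 : ε ≤ 1) : probOffDiff ε (thresholdEvent w s) ≤ 8 * √ε := by
  rcases le_or_gt ε (1 / 4) with hε | hε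
  · set m := ⌊1 / (2 * ε)⌋₊
    have hm_ge : 1 / (4 * ε) ≤ m := by
      have h := Nat.sub_one_lt_floor (1 / (2 * ε))
      have h4 : 1 ≤ 1 / (4 * ε) := by rw [le_div_iff₀ (by positivity)]; linarith
      have h2 : 1 / (2 * ε) = 1 / (4 * ε) + 1 / (4 * ε) := by field_simp; ring
      linarith
    have hm_le : (m : ℝ) ≤ 1 / (2 * ε) := Nat.floor_le (by positivity)
    have hm_pos : (0 : ℝ) < m := (by positivity : (0 : ℝ) < 1 / (4 * ε)).trans_le hm_ge
    refine (probOffDiff_thresholdEvent_le_inv_sqrt (Nat.cast_pos.mp hm_pos).ne' w s hε0.le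
      ?_).trans ?_
    · rwa [le_div_iff₀ (by positivity), mul_comm] at hm_le
    · rw [div_le_iff₀ (Real.sqrt_pos.mpr hm_pos), mul_assoc, ← Real.sqrt_mul hε0.le]
      have : (1 / 2 : ℝ) ≤ √(ε * m) := by
        rw [Real.le_sqrt (by norm_num) (by positivity)]
        rw [div_le_iff₀ (by positivity)] at hm_ge
        linarith
      linarith
  · calc probOffDiff ε (thresholdEvent w s) ≤ 1 := probOffDiff_le_one hε0.le hε1 _
      _ ≤ 8 * √ε := by
        have : (1 / 2 : ℝ) ≤ √ε := by
          rw [Real.le_sqrt (by norm_num) hε0.le]; linarith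
        linarith

/-- Weighted majority events are noise stable: P[M \ N_ε M] ≤ C ε^{1/4};
in particular the family of all weighted majority events is uniformly stable. -/
theorem wmaj_stable :
    ∃ C : ℝ,
      (∀ (n : ℕ) (w : Fin n → ℝ) (s : ℝ) (ε : ℝ), 0 < ε → ε < 1 →
        probOffDiff ε (wmajEvent n w s) ≤ C * ε ^ ((1:ℝ)/4)) ∧
      (∀ η : ℝ, 0 < η → ∃ ε₀ : ℝ, 0 < ε₀ ∧ ∀ ε : ℝ, 0 < ε → ε < ε₀ →
        ∀ (n : ℕ) (w : Fin n → ℝ) (s : ℝ),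
          probSymmDiff ε (wmajEvent n w s) < η) := by
  have hsqrt : ∀ (n : ℕ) (w : Fin n → ℝ) (s ε : ℝ), 0 < ε → ε ≤ 1 →
      probOffDiff ε (wmajEvent n w s) ≤ 8 * √ε := fun n w s ε hε0 hε1 => by
    rw [wmajEvent_eq_thresholdEvent]
    exact probOffDiff_thresholdEvent_le_sqrt w s hε0 hε1
  refine ⟨8, fun n w s ε hε0 hε1 => (hsqrt n w s ε hε0 hε1.le).trans ?_, fun η hη => ?_⟩
  · rw [Real.sqrt_eq_rpow]
    gcongr 8 * ?_
    exact Real.rpow_le_rpow_of_exponent_ge hε0 hε1.le (by norm_num)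
  · refine ⟨min 1 ((η / 16) ^ 2), by positivity, fun ε hε0 hε n w s => ?_⟩
    have hsq : √ε < η / 16 :=
      (Real.sqrt_lt' (by positivity)).mpr (hε.trans_le (min_le_right _ _))
    rw [probSymmDiff_eq_two_mul_probOffDiff]
    linarith [hsqrt n w s ε hε0 (hε.le.trans (min_le_left _ _))]

end BKS
end

section
/- There is a universal constant c with the following property. Let b > 0, let d ≥ 1, let v_1,…,v_d be reals with v_j ≥ b for all j, and let g = Σ_{j=1}^d z_j v_j, where z_1,…,z_d are independent with P[z_j = 1] = P[z_j = −1] = 1/2. Then for every t ≥ 1 and every s ∈ ℝ: P[|g − s| ≤ t b] ≤ c · t / √d. -/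
open Finset

namespace Nat

theorem centralBinom_sq_mul_le (n : ℕ) : n.centralBinom ^ 2 * (2 * n + 1) ≤ 16 ^ n := by
  induction n with
  | zero => simp
  | succ n ih =>
    have step := succ_mul_centralBinom_succ n
    refine le_of_mul_le_mul_left ?_ (by positivity : 0 < (n + 1) ^ 2)
    calc (n + 1) ^ 2 * ((n + 1).centralBinom ^ 2 * (2 * (n + 1) + 1))
        = ((n + 1) * (n + 1).centralBinom) ^ 2 * (2 * n + 3) := by ring
      _ = 4 * (2 * n + 1) * (2 * n + 3) * (n.centralBinom ^ 2 * (2 * n + 1)) := by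
        rw [step]; ring
      _ ≤ 16 * (n + 1) ^ 2 * 16 ^ n := Nat.mul_le_mul (by nlinarith) ih
      _ = (n + 1) ^ 2 * 16 ^ (n + 1) := by ring

theorem choose_half_sq_mul_le (d : ℕ) : d.choose (d / 2) ^ 2 * d ≤ 4 ^ d := by
  obtain ⟨n, rfl | rfl⟩ := even_or_odd' d
  · rw [show 2 * n / 2 = n by omega, ← centralBinom_eq_two_mul_choose, pow_mul]
    calc n.centralBinom ^ 2 * (2 * n) ≤ n.centralBinom ^ 2 * (2 * n + 1) := by gcongr; omega
      _ ≤ 16 ^ n := centralBinom_sq_mul_le n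
  · have hmiddle : (n + 1).centralBinom = 2 * (2 * n + 1).choose n := by
      rw [centralBinom_eq_two_mul_choose, show 2 * (n + 1) = 2 * n + 1 + 1 by ring,
        choose_succ_succ, choose_symm_half]
      ring
    rw [show (2 * n + 1) / 2 = n by omega]
    refine le_of_mul_le_mul_left ?_ (by norm_num : 0 < 4)
    calc 4 * ((2 * n + 1).choose n ^ 2 * (2 * n + 1))
        ≤ (n + 1).centralBinom ^ 2 * (2 * (n + 1) + 1) := by rw [hmiddle]; nlinarith
      _ ≤ 16 ^ (n + 1) := centralBinom_sq_mul_le (n + 1)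
      _ = 4 * 4 ^ (2 * n + 1) := by rw [pow_succ 4, pow_mul]; ring

end Nat

theorem choose_half_mul_sqrt_le (d : ℕ) : (d.choose (d / 2) : ℝ) * √d ≤ 2 ^ d := by
  refine (pow_le_pow_iff_left₀ (by positivity) (by positivity) two_ne_zero).mp ?_
  rw [mul_pow, Real.sq_sqrt d.cast_nonneg, ← pow_mul, mul_comm d, pow_mul]
  exact_mod_cast Nat.choose_half_sq_mul_le d

theorem card_le_mul_of_forall_card_Ico_le {α : Type*} {s : Finset α} {f : α → ℝ} {a w M : ℝ}
    {K : ℕ} (hw : 0 < w) (hs : ∀ x ∈ s, f x ∈ Set.Icc a (a + M * w))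
    (hK : ∀ c, #{x ∈ s | f x ∈ Set.Ico c (c + w)} ≤ K) :
    #s ≤ (⌊M⌋₊ + 1) * K := by
  rw [mul_comm, ← card_range (⌊M⌋₊ + 1)]
  refine card_le_mul_card_image_of_maps_to (f := fun x => ⌊(f x - a) / w⌋₊) (fun x hx => ?_) K
    fun i _ => (card_le_card fun x hx => ?_).trans (hK (a + i * w))
  · obtain ⟨-, hle⟩ := hs x hx
    rw [mem_range, Nat.lt_succ_iff]
    exact Nat.floor_le_floor <| (div_le_iff₀ hw).mpr (by linarith)
  · obtain ⟨hxs, rfl⟩ := mem_filter.mp hx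
    have hq : 0 ≤ (f x - a) / w := div_nonneg (by linarith [(hs x hxs).1]) hw.le
    have hlo := (le_div_iff₀ hw).mp (Nat.floor_le hq)
    have hhi := (div_lt_iff₀ hw).mp (Nat.lt_floor_add_one ((f x - a) / w))
    exact mem_filter.mpr ⟨hxs, by constructor <;> linarith⟩

section LittlewoodOfford

variable {ι : Type*} [Fintype ι]

def signedSum (v : ι → ℝ) (z : ι → Bool) : ℝ :=
  ∑ j, (if z j then (1 : ℝ) else -1) * v j

def trueSet (z : ι → Bool) : Finset ι := {j | z j = true}

theorem trueSet_injective : Function.Injective (trueSet : (ι → Bool) → Finset ι) := by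
  intro z w h
  funext j
  simpa [trueSet] using Finset.ext_iff.mp h j

theorem signedSum_eq (v : ι → ℝ) (z : ι → Bool) :
    signedSum v z = 2 * ∑ j ∈ trueSet z, v j - ∑ j, v j := by
  rw [trueSet, sum_filter, mul_sum, ← sum_sub_distrib]
  refine sum_congr rfl fun j _ => ?_
  split_ifs <;> ring

theorem signedSum_add_le_of_ssubset {v : ι → ℝ} {b : ℝ} (hb : 0 ≤ b) (hv : ∀ j, b ≤ v j)
    {z w : ι → Bool} (h : trueSet z ⊂ trueSet w) : signedSum v z + 2 * b ≤ signedSum v w := by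
  classical
  obtain ⟨j, hjw, hjz⟩ := exists_of_ssubset h
  have hsplit := sum_sdiff (f := v) h.subset
  have hj : b ≤ ∑ i ∈ trueSet w \ trueSet z, v i :=
    (hv j).trans (single_le_sum (fun i _ => hb.trans (hv i)) (mem_sdiff.mpr ⟨hjw, hjz⟩))
  rw [signedSum_eq, signedSum_eq]
  linarith

theorem card_signedSum_mem_Ico_le [DecidableEq ι] {v : ι → ℝ} {b : ℝ} (hb : 0 ≤ b)
    (hv : ∀ j, b ≤ v j) (c : ℝ) :
    #{z : ι → Bool | signedSum v z ∈ Set.Ico c (c + 2 * b)} ≤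
      (Fintype.card ι).choose (Fintype.card ι / 2) := by
  rw [← card_image_of_injective _ trueSet_injective]
  refine IsAntichain.sperner ?_
  rintro _ hU _ hV hne hsub
  simp only [coe_image, coe_filter, mem_univ, true_and, Set.mem_ofPred_eq, Set.mem_Ico,
    Set.mem_image] at hU hV
  obtain ⟨z, ⟨hz, -⟩, rfl⟩ := hU
  obtain ⟨w, ⟨-, hw⟩, rfl⟩ := hV
  linarith [signedSum_add_le_of_ssubset hb hv (hsub.ssubset_of_ne hne)]

end LittlewoodOfford

namespace BKS

/-- Anticoncentration for signed sums with all weights at least b. -/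
theorem anticoncentration_signed_sum :
    ∃ c : ℝ, ∀ b : ℝ, 0 < b → ∀ d : ℕ, 1 ≤ d →
      ∀ v : Fin d → ℝ, (∀ j, b ≤ v j) → ∀ t : ℝ, 1 ≤ t → ∀ s : ℝ,
        cprob (@Finset.filter _
            (fun z : Cube d =>
              |(∑ j, (if z j then (1:ℝ) else -1) * v j) - s| ≤ t * b)
            (Classical.decPred _) Finset.univ) ≤ c * t / Real.sqrt d := by
  refine ⟨2, fun b hb d hd v hv t ht s => ?_⟩
  set T := @Finset.filter _ (fun z : Cube d => |signedSum v z - s| ≤ t * b)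
    (Classical.decPred _) Finset.univ
  have hT : #T ≤ (⌊t⌋₊ + 1) * d.choose (d / 2) := by
    refine card_le_mul_of_forall_card_Ico_le (f := signedSum v) (a := s - t * b)
      (by positivity : 0 < 2 * b) (fun z hz => ?_) fun c => ?_
    · have := abs_le.mp (mem_filter.mp hz).2
      constructor <;> linarith
    · calc _ ≤ #{z : Cube d | signedSum v z ∈ Set.Ico c (c + 2 * b)} :=
            card_le_card (filter_subset_filter _ (subset_univ T))
        _ ≤ _ := by simpa using card_signedSum_mem_Ico_le hb.le hv c
  have hfloor : (⌊t⌋₊ : ℝ) + 1 ≤ 2 * t := by linarith [Nat.floor_le (zero_le_one.trans ht)]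
  have hsqrt : 0 < √(d : ℝ) := Real.sqrt_pos.mpr (by exact_mod_cast hd)
  rw [cprob, Fintype.card_fin, div_le_div_iff₀ (by positivity) hsqrt]
  calc (#T : ℝ) * √d ≤ (⌊t⌋₊ + 1) * (d.choose (d / 2) * √d) := by
        rw [← mul_assoc]; gcongr; exact_mod_cast hT
    _ ≤ 2 * t * 2 ^ d := by gcongr; exact choose_half_mul_sqrt_le d

end BKS
end

section
/- There is an absolute constant c > 0 such that for every n = 1, 2, … and every w ∈ ℝ^n with nonnegative coordinates and ‖w‖₂ = 1: Σ_{j=1}^n w_j I_j(M_w) ≥ c, where M_w(x) = sign(Σ_{j=1}^n (2x_j − 1) w_j). -/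
namespace BKS

open Finset Filter

variable {ι : Type} [Fintype ι] [DecidableEq ι]

-- auxiliary
noncomputable def eps (j : ι) (x : ι → Bool) : ℝ := 2 * (if x j then 1 else 0) - 1

noncomputable def SK (w : ι → ℝ) (K : Finset ι) (x : ι → Bool) : ℝ :=
  ∑ j ∈ K, eps j x * w j

lemma flip_flip (j : ι) : Function.Involutive (flipBit j) := by
  intro x
  funext k
  by_cases h : k = j
  · subst h; simp [flipBit]
  · simp [flipBit, Function.update_of_ne h]

lemma sum_flip (j : ι) (F : (ι → Bool) → ℝ) :
    ∑ x : ι → Bool, F (flipBit j x) = ∑ x : ι → Bool, F x :=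
  Fintype.sum_bijective (flipBit j) (flip_flip j).bijective _ _ (fun _ => rfl)

lemma eps_flip_self (j : ι) (x : ι → Bool) : eps j (flipBit j x) = - eps j x := by
  cases h : x j <;> simp [eps, flipBit, h] <;> norm_num

lemma eps_flip_ne {j k : ι} (h : k ≠ j) (x : ι → Bool) : eps k (flipBit j x) = eps k x := by
  simp [eps, flipBit, Function.update_of_ne h]

lemma eps_cases (j : ι) (x : ι → Bool) : eps j x = 1 ∨ eps j x = -1 := by
  cases h : x j <;> simp [eps, h] <;> norm_num

lemma SK_flip {K : Finset ι} {j : ι} (hj : j ∉ K) (w : ι → ℝ) (x : ι → Bool) :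
    SK w K (flipBit j x) = SK w K x :=
  Finset.sum_congr rfl (fun k hk => by
    rw [eps_flip_ne (by rintro rfl; exact hj hk)])

lemma odd_kill {j : ι} (g : (ι → Bool) → ℝ) (hg : ∀ x, g (flipBit j x) = g x) :
    ∑ x : ι → Bool, eps j x * g x = 0 := by
  have h1 : ∑ x : ι → Bool, eps j (flipBit j x) * g (flipBit j x)
      = ∑ x : ι → Bool, eps j x * g x := sum_flip j (fun x => eps j x * g x)
  simp only [eps_flip_self, hg, neg_mul] at h1
  rw [Finset.sum_neg_distrib] at h1
  linarith

lemma E2 (w : ι → ℝ) (K : Finset ι) :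
    ∑ x : ι → Bool, (SK w K x) ^ 2 = (∑ j ∈ K, w j ^ 2) * 2 ^ Fintype.card ι := by
  induction K using Finset.induction_on with
  | empty => simp [SK]
  | @insert j K hj ih =>
    have hins : ∀ x : ι → Bool, SK w (insert j K) x = eps j x * w j + SK w K x :=
      fun x => Finset.sum_insert hj
    have hpt : ∀ x : ι → Bool, (SK w (insert j K) x) ^ 2
        = (w j ^ 2 + (SK w K x) ^ 2) + (2 * w j) * (eps j x * SK w K x) := by
      intro x
      rcases eps_cases j x with h | h <;> rw [hins x, h] <;> ring
    have hz : ∑ x : ι → Bool, eps j x * SK w K x = 0 :=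
      odd_kill _ (fun x => SK_flip hj w x)
    have hcard : (Finset.univ : Finset (ι → Bool)).card = 2 ^ Fintype.card ι := by
      simp [Fintype.card_fun]
    calc ∑ x : ι → Bool, (SK w (insert j K) x) ^ 2
        = ∑ x : ι → Bool, ((w j ^ 2 + (SK w K x) ^ 2)
            + (2 * w j) * (eps j x * SK w K x)) :=
          Finset.sum_congr rfl (fun x _ => hpt x)
      _ = (∑ x : ι → Bool, (w j ^ 2 + (SK w K x) ^ 2))
            + (2 * w j) * ∑ x : ι → Bool, eps j x * SK w K x := by
          rw [Finset.sum_add_distrib, Finset.mul_sum]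
      _ = (w j ^ 2 * 2 ^ Fintype.card ι + (∑ j ∈ K, w j ^ 2) * 2 ^ Fintype.card ι) := by
          rw [hz, Finset.sum_add_distrib, ih, Finset.sum_const, hcard]
          push_cast
          ring
      _ = (∑ j ∈ insert j K, w j ^ 2) * 2 ^ Fintype.card ι := by
          rw [Finset.sum_insert hj]; ring

lemma E4 (w : ι → ℝ) (K : Finset ι) :
    ∑ x : ι → Bool, (SK w K x) ^ 4 ≤ 3 * (∑ j ∈ K, w j ^ 2) ^ 2 * 2 ^ Fintype.card ι := by
  induction K using Finset.induction_on with
  | empty => simp [SK]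
  | @insert j K hj ih =>
    have hins : ∀ x : ι → Bool, SK w (insert j K) x = eps j x * w j + SK w K x :=
      fun x => Finset.sum_insert hj
    have hpt : ∀ x : ι → Bool, (SK w (insert j K) x) ^ 4
        = (w j ^ 4 + 6 * w j ^ 2 * (SK w K x) ^ 2 + (SK w K x) ^ 4)
          + ((4 * w j ^ 3) * (eps j x * SK w K x)
             + (4 * w j) * (eps j x * (SK w K x) ^ 3)) := by
      intro x
      rcases eps_cases j x with h | h <;> rw [hins x, h] <;> ring
    have hz1 : ∑ x : ι → Bool, eps j x * SK w K x = 0 :=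
      odd_kill _ (fun x => SK_flip hj w x)
    have hz3 : ∑ x : ι → Bool, eps j x * (SK w K x) ^ 3 = 0 :=
      odd_kill _ (fun x => by rw [SK_flip hj w x])
    have hcard : (Finset.univ : Finset (ι → Bool)).card = 2 ^ Fintype.card ι := by
      simp [Fintype.card_fun]
    have h2 := E2 w K
    have hs : (0:ℝ) ≤ ∑ j ∈ K, w j ^ 2 :=
      Finset.sum_nonneg (fun j _ => sq_nonneg _)
    have hNpos : (0:ℝ) < 2 ^ Fintype.card ι := by positivity
    calc ∑ x : ι → Bool, (SK w (insert j K) x) ^ 4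
        = (∑ x : ι → Bool, (w j ^ 4 + 6 * w j ^ 2 * (SK w K x) ^ 2 + (SK w K x) ^ 4))
            + ((4 * w j ^ 3) * ∑ x : ι → Bool, eps j x * SK w K x
               + (4 * w j) * ∑ x : ι → Bool, eps j x * (SK w K x) ^ 3) := by
          rw [Finset.mul_sum, Finset.mul_sum, ← Finset.sum_add_distrib,
            ← Finset.sum_add_distrib]
          exact Finset.sum_congr rfl (fun x _ => hpt x)
      _ = w j ^ 4 * 2 ^ Fintype.card ι
            + 6 * w j ^ 2 * ((∑ j ∈ K, w j ^ 2) * 2 ^ Fintype.card ι)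
            + ∑ x : ι → Bool, (SK w K x) ^ 4 := by
          rw [hz1, hz3, Finset.sum_add_distrib, Finset.sum_add_distrib,
            Finset.sum_const, hcard, ← Finset.mul_sum, h2]
          push_cast
          ring
      _ ≤ 3 * (∑ j ∈ insert j K, w j ^ 2) ^ 2 * 2 ^ Fintype.card ι := by
          rw [Finset.sum_insert hj]
          nlinarith [ih, hNpos, hs, sq_nonneg (w j), sq_nonneg (w j ^ 2),
            mul_nonneg (mul_nonneg (sq_nonneg (w j ^ 2)) hNpos.le) hs]

lemma sign_mono {a b : ℝ} (h : a ≤ b) : Real.sign a ≤ Real.sign b := by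
  rcases lt_trichotomy a 0 with ha | ha | ha <;>
    rcases lt_trichotomy b 0 with hb | hb | hb
  · rw [Real.sign_of_neg ha, Real.sign_of_neg hb]
  · rw [Real.sign_of_neg ha, hb, Real.sign_zero]; norm_num
  · rw [Real.sign_of_neg ha, Real.sign_of_pos hb]; norm_num
  · linarith
  · rw [ha, hb]
  · rw [ha, Real.sign_zero, Real.sign_of_pos hb]; norm_num
  · linarith
  · linarith
  · rw [Real.sign_of_pos ha, Real.sign_of_pos hb]

lemma sign_mul_self (s : ℝ) : Real.sign s * s = |s| := by
  rcases lt_trichotomy s 0 with h | h | h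
  · rw [Real.sign_of_neg h, abs_of_neg h]; ring
  · simp [h]
  · rw [Real.sign_of_pos h, abs_of_pos h]; ring

lemma absS_lower (w : ι → ℝ) (hw2 : ∑ j : ι, w j ^ 2 = 1) :
    (2:ℝ) ^ Fintype.card ι / 2 ≤ ∑ x : ι → Bool, |SK w Finset.univ x| := by
  set N : ℝ := 2 ^ Fintype.card ι with hNdef
  have hN : (0:ℝ) < N := by positivity
  have hP : ∑ x : ι → Bool, (SK w Finset.univ x) ^ 2 = N := by
    rw [E2 w Finset.univ, hw2, one_mul]
  have hQ : ∑ x : ι → Bool, (SK w Finset.univ x) ^ 4 ≤ 3 * N := by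
    have := E4 w Finset.univ
    rwa [hw2, one_pow, mul_one] at this
  set A := ∑ x : ι → Bool, |SK w Finset.univ x| with hA
  set C := ∑ x : ι → Bool, |SK w Finset.univ x| ^ 3 with hC
  have hA0 : 0 ≤ A := Finset.sum_nonneg (fun x _ => abs_nonneg _)
  have hC0 : 0 ≤ C := Finset.sum_nonneg (fun x _ => by positivity)
  have h1 : N ^ 2 ≤ A * C := by
    have cs := Finset.sum_mul_sq_le_sq_mul_sq Finset.univ
      (fun x : ι → Bool => Real.sqrt |SK w Finset.univ x|)
      (fun x : ι → Bool => Real.sqrt (|SK w Finset.univ x| ^ 3))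
    have e1 : ∀ x : ι → Bool,
        Real.sqrt |SK w Finset.univ x| * Real.sqrt (|SK w Finset.univ x| ^ 3)
          = (SK w Finset.univ x) ^ 2 := by
      intro x
      rw [← Real.sqrt_mul (abs_nonneg _)]
      have hsq : |SK w Finset.univ x| ^ 2 = (SK w Finset.univ x) ^ 2 := sq_abs _
      have : |SK w Finset.univ x| * |SK w Finset.univ x| ^ 3
          = ((SK w Finset.univ x) ^ 2) ^ 2 := by
        linear_combination (|SK w Finset.univ x| ^ 2 + (SK w Finset.univ x) ^ 2) * hsq
      rw [this, Real.sqrt_sq (sq_nonneg _)]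
    have e2 : ∀ x : ι → Bool,
        (Real.sqrt |SK w Finset.univ x|) ^ 2 = |SK w Finset.univ x| :=
      fun x => Real.sq_sqrt (abs_nonneg _)
    have e3 : ∀ x : ι → Bool,
        (Real.sqrt (|SK w Finset.univ x| ^ 3)) ^ 2 = |SK w Finset.univ x| ^ 3 :=
      fun x => Real.sq_sqrt (by positivity)
    calc N ^ 2 = (∑ x : ι → Bool,
          Real.sqrt |SK w Finset.univ x| * Real.sqrt (|SK w Finset.univ x| ^ 3)) ^ 2 := by
          rw [Finset.sum_congr rfl (fun x _ => e1 x), hP]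
      _ ≤ (∑ x : ι → Bool, (Real.sqrt |SK w Finset.univ x|) ^ 2)
            * ∑ x : ι → Bool, (Real.sqrt (|SK w Finset.univ x| ^ 3)) ^ 2 := cs
      _ = A * C := by
          rw [Finset.sum_congr rfl (fun x _ => e2 x), Finset.sum_congr rfl (fun x _ => e3 x)]
  have h2 : C ^ 2 ≤ N * (3 * N) := by
    have cs := Finset.sum_mul_sq_le_sq_mul_sq Finset.univ
      (fun x : ι → Bool => |SK w Finset.univ x|)
      (fun x : ι → Bool => (SK w Finset.univ x) ^ 2)
    have e1 : ∀ x : ι → Bool,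
        |SK w Finset.univ x| * (SK w Finset.univ x) ^ 2 = |SK w Finset.univ x| ^ 3 := by
      intro x
      have hsq : |SK w Finset.univ x| ^ 2 = (SK w Finset.univ x) ^ 2 := sq_abs _
      linear_combination (-|SK w Finset.univ x|) * hsq
    have e2 : ∀ x : ι → Bool, |SK w Finset.univ x| ^ 2 = (SK w Finset.univ x) ^ 2 :=
      fun x => sq_abs _
    have e3 : ∀ x : ι → Bool, ((SK w Finset.univ x) ^ 2) ^ 2 = (SK w Finset.univ x) ^ 4 := by
      intro x; ring
    calc C ^ 2 = (∑ x : ι → Bool, |SK w Finset.univ x| * (SK w Finset.univ x) ^ 2) ^ 2 := by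
          rw [Finset.sum_congr rfl (fun x _ => e1 x)]
      _ ≤ (∑ x : ι → Bool, |SK w Finset.univ x| ^ 2)
            * ∑ x : ι → Bool, ((SK w Finset.univ x) ^ 2) ^ 2 := cs
      _ ≤ N * (3 * N) := by
          rw [Finset.sum_congr rfl (fun x _ => e2 x), hP,
            Finset.sum_congr rfl (fun x _ => e3 x)]
          exact mul_le_mul_of_nonneg_left hQ hN.le
  -- N^4 ≤ (A C)^2 ≤ A^2 * 3 N^2, so A^2 ≥ N^2/3 ≥ (N/2)^2
  have h3 : N ^ 4 ≤ A ^ 2 * (3 * N ^ 2) := by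
    have : (N ^ 2) ^ 2 ≤ (A * C) ^ 2 := by
      apply pow_le_pow_left₀ (by positivity) h1
    nlinarith [sq_nonneg A, sq_nonneg C, mul_le_mul_of_nonneg_left h2 (sq_nonneg A)]
  have hA2 : (N / 2) ^ 2 ≤ A ^ 2 := by nlinarith [h3, mul_pos hN hN, sq_nonneg N]
  exact (pow_le_pow_iff_left₀ (by positivity) hA0 two_ne_zero).mp hA2

lemma SK_flip_univ (w : ι → ℝ) (j : ι) (x : ι → Bool) :
    SK w Finset.univ (flipBit j x) = SK w Finset.univ x - 2 * eps j x * w j := by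
  have h : SK w Finset.univ (flipBit j x) - SK w Finset.univ x
      = ∑ k : ι, (eps k (flipBit j x) - eps k x) * w k := by
    unfold SK
    rw [← Finset.sum_sub_distrib]
    exact Finset.sum_congr rfl (fun k _ => by ring)
  have h2 : ∑ k : ι, (eps k (flipBit j x) - eps k x) * w k = -2 * eps j x * w j := by
    rw [Finset.sum_eq_single j]
    · rw [eps_flip_self]; ring
    · intro k _ hk; rw [eps_flip_ne hk]; ring
    · intro h; exact absurd (Finset.mem_univ j) h
  linarith [h, h2]

lemma flip_flip' (j : ι) (x : ι → Bool) : flipBit j (flipBit j x) = x := flip_flip j x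

lemma abs_diff_eq (w : ι → ℝ) (hw : ∀ j, 0 ≤ w j) (j : ι) (x : ι → Bool) :
    |wMajority w (flipBit j x) - wMajority w x|
      = eps j x * (wMajority w x - wMajority w (flipBit j x)) := by
  have hM : ∀ y : ι → Bool, wMajority w y = Real.sign (SK w Finset.univ y) := fun y => rfl
  rw [hM, hM]
  have hS := SK_flip_univ w j x
  rcases eps_cases j x with h | h
  · rw [h]
    have hle : SK w Finset.univ (flipBit j x) ≤ SK w Finset.univ x := by
      rw [hS, h]; nlinarith [hw j]
    have := sign_mono hle
    rw [abs_of_nonpos (by linarith)]; ring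
  · rw [h]
    have hle : SK w Finset.univ x ≤ SK w Finset.univ (flipBit j x) := by
      rw [hS, h]; nlinarith [hw j]
    have := sign_mono hle
    rw [abs_of_nonneg (by linarith)]; ring

lemma influence_sum (w : ι → ℝ) (hw : ∀ j, 0 ≤ w j) (j : ι) :
    ∑ x : ι → Bool, |wMajority w (flipBit j x) - wMajority w x|
      = 2 * ∑ x : ι → Bool, eps j x * wMajority w x := by
  have h1 : ∑ x : ι → Bool, |wMajority w (flipBit j x) - wMajority w x|
      = ∑ x : ι → Bool, (eps j x * wMajority w x - eps j x * wMajority w (flipBit j x)) := by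
    refine Finset.sum_congr rfl (fun x _ => ?_)
    rw [abs_diff_eq w hw j x]; ring
  have h2 : ∑ x : ι → Bool, eps j x * wMajority w (flipBit j x)
      = - ∑ x : ι → Bool, eps j x * wMajority w x := by
    have h3 := sum_flip j (fun x => eps j x * wMajority w (flipBit j x))
    simp only [flip_flip', eps_flip_self, neg_mul] at h3
    rw [Finset.sum_neg_distrib] at h3
    linarith
  rw [h1, Finset.sum_sub_distrib, h2]
  ring

/-- The inner product of a unit weight vector with the influence vector of its
weighted majority is bounded below by an absolute constant. -/
theorem weight_dot_influence_ge :
    ∃ c : ℝ, 0 < c ∧ ∀ (n : ℕ), 1 ≤ n → ∀ w : Fin n → ℝ,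
      (∀ j, 0 ≤ w j) → (∑ j, w j ^ 2) = 1 →
      c ≤ ∑ j, w j * influence j (wMajority w) := by
  refine ⟨1, one_pos, ?_⟩
  intro n _ w hw hw2
  have hM : ∀ y : Fin n → Bool, wMajority w y = Real.sign (SK w Finset.univ y) := fun y => rfl
  set N : ℝ := 2 ^ Fintype.card (Fin n) with hNdef
  have hN : (0:ℝ) < N := by positivity
  have h1 : ∀ j, influence j (wMajority w)
      = 2 * (∑ x : Fin n → Bool, eps j x * wMajority w x) / N := by
    intro j
    show cexpect _ = _
    unfold cexpect
    rw [show (∑ x : Fin n → Bool, |wMajority w (flipBit j x) - wMajority w x|)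
        = 2 * ∑ x : Fin n → Bool, eps j x * wMajority w x from influence_sum w hw j]
  have key : ∑ j, w j * influence j (wMajority w)
      = (2 / N) * ∑ x : Fin n → Bool, |SK w Finset.univ x| := by
    calc ∑ j, w j * influence j (wMajority w)
        = ∑ j, (2 / N) * (w j * ∑ x : Fin n → Bool, eps j x * wMajority w x) := by
          refine Finset.sum_congr rfl (fun j _ => ?_)
          rw [h1 j]; ring
      _ = (2 / N) * ∑ j, ∑ x : Fin n → Bool, w j * (eps j x * wMajority w x) := by
          rw [Finset.mul_sum]
          refine Finset.sum_congr rfl (fun j _ => ?_)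
          rw [Finset.mul_sum]
      _ = (2 / N) * ∑ x : Fin n → Bool, ∑ j, w j * (eps j x * wMajority w x) := by
          rw [Finset.sum_comm]
      _ = (2 / N) * ∑ x : Fin n → Bool, |SK w Finset.univ x| := by
          congr 1
          refine Finset.sum_congr rfl (fun x _ => ?_)
          have : ∑ j, w j * (eps j x * wMajority w x)
              = wMajority w x * SK w Finset.univ x := by
            unfold SK
            rw [Finset.mul_sum]
            exact Finset.sum_congr rfl (fun j _ => by ring)
          rw [this, hM x, sign_mul_self]
  rw [key]
  have hlow := absS_lower w hw2
  rw [div_mul_eq_mul_div, le_div_iff₀ hN]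
  have : N / 2 ≤ ∑ x : Fin n → Bool, |SK w Finset.univ x| := hlow
  linarith


end BKS
end
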